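/- Let P be a nonzero polynomial in n complex variables. Then every connected component of the complement ℝⁿ ∖ 𝒜_P of the amoeba of P is an open convex subset of ℝⁿ. -/

import Mathlib

/-!
Write points of the torus over `a ∈ ℝⁿ` as `zᵢ = exp(aᵢ) uᵢ` with `|uᵢ| = 1`. For a segment
`[x, y]` and fixed `u`, the map `w ↦ P(exp(xᵢ + w (yᵢ - xᵢ)) uᵢ)` is entire, and on the strip
`0 ≤ Re w ≤ 1` it runs over the tube above `[x, y]`. If that tube avoids the zeros of `P`, then
`1 / P` is bounded on the strip and Phragmén–Lindelöf bounds `|P|` below on the whole tube by its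
minimum over the two end tori. This lower bound is uniform for `y` near a point of the amoeba
complement and survives limits, so the set of `y` for which `[x, y]` misses the amoeba is closed in
the complement; it is also open, hence contains the whole component of `x`.
-/

/-- The zero locus in the complex torus `(ℂ∖{0})ⁿ` of a polynomial in `n` variables. -/
def curveN {n : ℕ} (P : MvPolynomial (Fin n) ℂ) : Set (Fin n → ℂ) :=
  {z | (∀ i, z i ≠ 0) ∧ MvPolynomial.eval z P = 0}

/-- The logarithmic projection `Log(z) = (log|z₁|, …, log|zₙ|)`. -/
noncomputable def LogN {n : ℕ} (z : Fin n → ℂ) : Fin n → ℝ :=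
  fun i => Real.log ‖z i‖

/-- The amoeba of a polynomial in `n` variables. -/
noncomputable def amoebaN {n : ℕ} (P : MvPolynomial (Fin n) ℂ) : Set (Fin n → ℝ) :=
  LogN '' curveN P

open Set Metric Complex

section Segment

variable {E : Type*} [AddCommGroup E] [Module ℝ E] [TopologicalSpace E]
  [IsTopologicalAddGroup E] [ContinuousSMul ℝ E]

theorem isOpen_setOf_segment_subset {s : Set E} (hs : IsOpen s) (x : E) :
    IsOpen {y | segment ℝ x y ⊆ s} := by
  have hcompl : {y | segment ℝ x y ⊆ s}ᶜ =
      Prod.snd '' {p : unitInterval × E | x + (p.1 : ℝ) • (p.2 - x) ∈ sᶜ} := by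
    ext y
    simp [segment_eq_image', subset_def, unitInterval, and_assoc]
  rw [← isClosed_compl_iff, hcompl]
  exact isClosedMap_snd_of_compactSpace _ (hs.isClosed_compl.preimage (by fun_prop))

theorem convex_connectedComponentIn_of_segment_subset {s : Set E}
    (h : ∀ y ∈ s, ∀ z ∈ connectedComponentIn s y, segment ℝ y z ⊆ s) (x : E) :
    Convex ℝ (connectedComponentIn s x) := by
  refine convex_iff_segment_subset.2 fun y hy z hz => ?_
  rw [connectedComponentIn_eq hy] at hz ⊢
  exact (convex_segment y z).isPreconnected.subset_connectedComponentIn (left_mem_segment ℝ y z)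
    (h y (connectedComponentIn_subset _ _ hy) z hz)

end Segment

theorem le_norm_of_le_norm_re_eq_zero_one {g : ℂ → ℂ} (hg : Differentiable ℂ g) {δ C : ℝ}
    (hδ : 0 < δ) (hC : 0 < C) (hbdd : ∀ w : ℂ, w.re ∈ Icc 0 1 → δ ≤ ‖g w‖)
    (h₀ : ∀ w : ℂ, w.re = 0 → C ≤ ‖g w‖) (h₁ : ∀ w : ℂ, w.re = 1 → C ≤ ‖g w‖)
    {w : ℂ} (hw : w.re ∈ Icc 0 1) : C ≤ ‖g w‖ := by
  have hg₀ : ∀ w : ℂ, w.re ∈ Icc 0 1 → g w ≠ 0 :=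
    fun w hw => norm_pos_iff.1 (hδ.trans_le (hbdd w hw))
  have hdiff : DiffContOnCl ℂ (fun w => (g w)⁻¹) (re ⁻¹' Ioo 0 1) := by
    refine DifferentiableOn.diffContOnCl ?_
    rw [closure_preimage_re, closure_Ioo zero_ne_one]
    exact hg.differentiableOn.inv hg₀
  have hbound : (fun w => (g w)⁻¹) =O[Filter.comap (_root_.abs ∘ im) Filter.atTop ⊓
      Filter.principal (re ⁻¹' Ioo 0 1)] fun w => Real.exp (0 * Real.exp (0 * |w.im|)) := by
    refine Asymptotics.IsBigO.of_bound δ⁻¹ (Filter.eventually_inf_principal.2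
      (Filter.Eventually.of_forall fun w hw => ?_))
    simpa using inv_anti₀ hδ (hbdd w (Ioo_subset_Icc_self hw))
  have hinv : ‖(g w)⁻¹‖ ≤ C⁻¹ :=
    PhragmenLindelof.vertical_strip (f := fun w => (g w)⁻¹) (a := 0) (b := 1) hdiff
      ⟨0, by simpa using Real.pi_pos, 0, hbound⟩
      (fun w hw => by simpa using inv_anti₀ hC (h₀ w hw))
      (fun w hw => by simpa using inv_anti₀ hC (h₁ w hw)) hw.1 hw.2
  rw [norm_inv] at hinv
  exact (inv_le_inv₀ (norm_pos_iff.2 (hg₀ w hw)) hC).1 hinv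

namespace Amoeba

variable {ι : Type*}

noncomputable def torusPoint (a : ι → ℝ) (u : ι → Circle) : ι → ℂ :=
  fun i => Real.exp (a i) * u i

def torusAmoeba (F : (ι → ℂ) → ℂ) : Set (ι → ℝ) :=
  {a | ∃ u, F (torusPoint a u) = 0}

theorem continuous_torusPoint :
    Continuous fun p : (ι → ℝ) × (ι → Circle) => torusPoint p.1 p.2 := by
  unfold torusPoint
  fun_prop

theorem exists_torusPoint_eq {z : ι → ℂ} (hz : ∀ i, z i ≠ 0) :
    ∃ u, torusPoint (fun i => Real.log ‖z i‖) u = z :=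
  ⟨fun i => Circle.exp (z i).arg, funext fun i => by
    simp [torusPoint, Real.exp_log (norm_pos_iff.2 (hz i)), Circle.coe_exp,
      norm_mul_exp_arg_mul_I]⟩

theorem cexp_mul_eq_torusPoint (x d : ι → ℝ) (u : ι → Circle) (w : ℂ) :
    (fun i => cexp (x i + w * d i) * u i) =
      torusPoint (x + w.re • d) (fun i => Circle.exp (w.im * d i) * u i) := by
  funext i
  have hw : (x i : ℂ) + w * d i = ↑(x i + w.re * d i) + ↑(w.im * d i) * I := by
    conv_lhs => rw [← re_add_im w]
    push_cast
    ring
  simp only [torusPoint, hw, Complex.exp_add, Circle.coe_mul, Circle.coe_exp, ofReal_exp,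
    Pi.add_apply, Pi.smul_apply, smul_eq_mul]
  ring

theorem amoebaN_eq_torusAmoeba {n : ℕ} (P : MvPolynomial (Fin n) ℂ) :
    amoebaN P = torusAmoeba (MvPolynomial.eval · P) := by
  ext a
  constructor
  · rintro ⟨z, ⟨hz, hPz⟩, rfl⟩
    obtain ⟨u, hu⟩ := exists_torusPoint_eq hz
    exact ⟨u, show MvPolynomial.eval (torusPoint (fun i => Real.log ‖z i‖) u) P = 0 by rwa [hu]⟩
  · rintro ⟨u, hu⟩
    refine ⟨torusPoint a u, ⟨fun i => by simp [torusPoint], hu⟩, ?_⟩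
    funext i
    simp [LogN, torusPoint, Circle.norm_coe]

variable {F : (ι → ℂ) → ℂ}

theorem isClosed_torusAmoeba (hF : Continuous F) : IsClosed (torusAmoeba F) := by
  have h : torusAmoeba F =
      Prod.fst '' {p : (ι → ℝ) × (ι → Circle) | F (torusPoint p.1 p.2) = 0} := by
    ext a
    simp [torusAmoeba]
  rw [h]
  exact isClosedMap_fst_of_compactSpace _
    (isClosed_eq (hF.comp continuous_torusPoint) continuous_const)

theorem exists_pos_le_norm_of_isCompact (hF : Continuous F) {K : Set (ι → ℝ)}
    (hK : IsCompact K) (hKA : K ⊆ (torusAmoeba F)ᶜ) :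
    ∃ δ > 0, ∀ a ∈ K, ∀ u, δ ≤ ‖F (torusPoint a u)‖ := by
  obtain ⟨δ, hδ, hle⟩ := (hK.prod isCompact_univ).exists_forall_le'
    (hF.comp continuous_torusPoint).norm.continuousOn
    (fun p hp => norm_pos_iff.2 fun h => hKA hp.1 ⟨p.2, h⟩)
  exact ⟨δ, hδ, fun a ha u => hle (a, u) ⟨ha, mem_univ u⟩⟩

variable [Fintype ι]

theorem le_norm_of_mem_segment (hF : Differentiable ℂ F) {x y : ι → ℝ}
    (hseg : segment ℝ x y ⊆ (torusAmoeba F)ᶜ) {C : ℝ} (hC : 0 < C)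
    (hx : ∀ u, C ≤ ‖F (torusPoint x u)‖) (hy : ∀ u, C ≤ ‖F (torusPoint y u)‖)
    {a : ι → ℝ} (ha : a ∈ segment ℝ x y) (u : ι → Circle) : C ≤ ‖F (torusPoint a u)‖ := by
  rw [segment_eq_image'] at ha hseg
  obtain ⟨t, ht, rfl⟩ := ha
  obtain ⟨δ, hδ, hδle⟩ := exists_pos_le_norm_of_isCompact hF.continuous
    (isCompact_Icc.image (by fun_prop)) hseg
  set g : ℂ → ℂ := fun w => F (fun i => cexp (x i + w * (y - x) i) * u i)
  have hg_eq (w : ℂ) : g w = F (torusPoint (x + w.re • (y - x))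
      (fun i => Circle.exp (w.im * (y - x) i) * u i)) :=
    congrArg F (cexp_mul_eq_torusPoint x (y - x) u w)
  have hg : Differentiable ℂ g := hF.comp (differentiable_pi.2 fun i => by fun_prop)
  have hstrip := le_norm_of_le_norm_re_eq_zero_one hg hδ hC
    (fun w hw => hg_eq w ▸ hδle _ ⟨w.re, hw, rfl⟩ _)
    (fun w hw => by simpa [hg_eq, hw] using hx _)
    (fun w hw => by simpa [hg_eq, hw] using hy _) (w := t) (by simpa using ht)
  simpa [hg_eq] using hstrip

theorem segment_subset_of_mem_closure (hF : Differentiable ℂ F) {x y : ι → ℝ}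
    (hx : x ∉ torusAmoeba F) (hy : y ∉ torusAmoeba F)
    (hcl : y ∈ closure {y' | segment ℝ x y' ⊆ (torusAmoeba F)ᶜ}) :
    segment ℝ x y ⊆ (torusAmoeba F)ᶜ := by
  obtain ⟨ε, hε, hball⟩ :=
    Metric.isOpen_iff.1 (isClosed_torusAmoeba hF.continuous).isOpen_compl y hy
  obtain ⟨δ₁, hδ₁, hδ₁x⟩ := exists_pos_le_norm_of_isCompact hF.continuous isCompact_singleton
    (singleton_subset_iff.2 hx)
  obtain ⟨δ₂, hδ₂, hδ₂y⟩ := exists_pos_le_norm_of_isCompact hF.continuous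
    (isCompact_closedBall y (ε / 2)) ((closedBall_subset_ball (half_lt_self hε)).trans hball)
  have hC : 0 < min δ₁ δ₂ := lt_min hδ₁ hδ₂
  set T := {y' | ∀ t ∈ Icc (0 : ℝ) 1, ∀ u,
    min δ₁ δ₂ ≤ ‖F (torusPoint (x + t • (y' - x)) u)‖}
  have hT : IsClosed T := by
    simp only [T, ofPred_forall]
    exact isClosed_biInter fun t _ => isClosed_iInter fun u => isClosed_le continuous_const
      ((hF.continuous.comp continuous_torusPoint).norm.comp
        (f := fun y' => (x + t • (y' - x), u)) (by fun_prop))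
  have hsub : ball y (ε / 2) ∩ {y' | segment ℝ x y' ⊆ (torusAmoeba F)ᶜ} ⊆ T := by
    rintro y' ⟨hy'ball, hy'seg⟩ t ht u
    exact le_norm_of_mem_segment hF hy'seg hC
      (fun u => (min_le_left _ _).trans (hδ₁x x rfl u))
      (fun u => (min_le_right _ _).trans (hδ₂y y' (ball_subset_closedBall hy'ball) u))
      (segment_eq_image' ℝ x y' ▸ ⟨t, ht, rfl⟩) u
  have hyT : y ∈ T :=
    hT.closure_subset_iff.2 hsub (isOpen_ball.inter_closure ⟨mem_ball_self (half_pos hε), hcl⟩)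
  rw [segment_eq_image']
  rintro _ ⟨t, ht, rfl⟩ ⟨u, hu⟩
  have h := hyT t ht u
  rw [hu, norm_zero] at h
  exact hC.not_ge h

theorem connectedComponentIn_subset_setOf_segment_subset (hF : Differentiable ℂ F)
    {x : ι → ℝ} (hx : x ∉ torusAmoeba F) :
    connectedComponentIn (torusAmoeba F)ᶜ x ⊆ {y | segment ℝ x y ⊆ (torusAmoeba F)ᶜ} :=
  isPreconnected_connectedComponentIn.subset_of_closure_inter_subset
    (isOpen_setOf_segment_subset (isClosed_torusAmoeba hF.continuous).isOpen_compl x)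
    ⟨x, mem_connectedComponentIn hx, by simpa using hx⟩
    fun _ ⟨hycl, hyC⟩ =>
      segment_subset_of_mem_closure hF hx (connectedComponentIn_subset _ _ hyC) hycl

theorem convex_connectedComponentIn_compl_torusAmoeba (hF : Differentiable ℂ F) (x : ι → ℝ) :
    Convex ℝ (connectedComponentIn (torusAmoeba F)ᶜ x) :=
  convex_connectedComponentIn_of_segment_subset
    (fun _ hy _ hz => connectedComponentIn_subset_setOf_segment_subset hF hy hz) x

end Amoeba

open Amoeba in
theorem component_of_amoeba_complement_isOpen_convex_general {n : ℕ}
    (P : MvPolynomial (Fin n) ℂ) (E : Set (Fin n → ℝ))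
    (hE : ∃ x ∈ (amoebaN P)ᶜ, E = connectedComponentIn (amoebaN P)ᶜ x) :
    IsOpen E ∧ Convex ℝ E := by
  obtain ⟨x, -, rfl⟩ := hE
  have hP : Differentiable ℂ (MvPolynomial.eval · P) :=
    differentiableOn_univ.1 (AnalyticOnNhd.eval_mvPolynomial P).differentiableOn
  rw [amoebaN_eq_torusAmoeba]
  exact ⟨(isClosed_torusAmoeba hP.continuous).isOpen_compl.connectedComponentIn,
    convex_connectedComponentIn_compl_torusAmoeba hP x⟩

/-- Every connected component of the complement of the amoeba of a nonzero polynomial in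
`n` complex variables is open and convex. -/
theorem component_of_amoeba_complement_isOpen_convex {n : ℕ}
    (P : MvPolynomial (Fin n) ℂ) (hP : P ≠ 0) (E : Set (Fin n → ℝ))
    (hE : ∃ x ∈ (amoebaN P)ᶜ, E = connectedComponentIn (amoebaN P)ᶜ x) :
    IsOpen E ∧ Convex ℝ E :=
  component_of_amoeba_complement_isOpen_convex_general P E hE
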